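/- (Theorem 4.5) Consider the greedy round-robin process for agent i with a normalized monotone submodular objective f and a cardinality constraint I = {S : |S| ≤ k}, and let S be agent i's final set. Let T = {t_1, …, t_{k'}} with k' ≤ k be a set of items, indexed in the order in which they are removed from the pool of available items, such that no element of T is removed before agent i's first pick and at most one element of T is removed between any two consecutive turns of agent i. Then f(S) ≥ f(T) / 2. -/

import Mathlib

/-!
Write `S_r` for the agent's solution before its `r`-th pick and `S = S_s` for the final one.
The item `t j` is still available at turn `j`, so the greedy gain `f(S_{j+1}) - f(S_j)` is at least
the marginal value of `t j` with respect to `S_j`, hence, by submodularity, with respect to `S`.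
The agent has at least `k'` turns (otherwise `t s` would still be available at the end while the
solution is not full), so summing over `j < k'` and telescoping gives
`f(S ∪ T) - f(S) ≤ ∑ⱼ f(t j | S) ≤ f(S_{k'}) ≤ f(S)`, and `f(T) ≤ f(S ∪ T)` by monotonicity.
-/

open Finset

/-- A set function on subsets of a finite ground set is submodular if the marginal value of any
item with respect to a smaller set is at least its marginal value with respect to a larger set. -/
def Submodular {α : Type*} [DecidableEq α] (f : Finset α → ℝ) : Prop :=
  ∀ ⦃S T : Finset α⦄, S ⊆ T → ∀ ⦃x : α⦄, x ∉ T →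
    f (insert x T) - f T ≤ f (insert x S) - f S

/-- The agent's solution just before their `r`-th pick: the set of the first `r` picked items. -/
def solAt {α : Type*} [DecidableEq α] (pick : ℕ → α) (r : ℕ) : Finset α :=
  (Finset.range r).image pick

section Lemmas

variable {α : Type*} [DecidableEq α]

theorem Submodular.le_add_sum_marginal {f : Finset α → ℝ}
    (hmono : ∀ ⦃S T : Finset α⦄, S ⊆ T → f S ≤ f T) (hsub : Submodular f)
    {ι : Type*} [DecidableEq ι] (S : Finset α) (t : ι → α) (I : Finset ι) :
    f (S ∪ I.image t) ≤ f S + ∑ i ∈ I, (f (insert (t i) S) - f S) := by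
  induction I using Finset.induction_on with
  | empty => simp
  | insert i I hi ih =>
    rw [image_insert, union_insert, sum_insert hi]
    by_cases ht : t i ∈ S ∪ I.image t
    · have : f S ≤ f (insert (t i) S) := hmono (subset_insert _ _)
      rw [insert_eq_of_mem ht]
      linarith
    · have := hsub subset_union_left ht
      linarith

section solAt

variable (pick : ℕ → α)

@[simp]
theorem solAt_zero : solAt pick 0 = ∅ := by
  simp [solAt]

theorem solAt_succ (r : ℕ) : solAt pick (r + 1) = insert (pick r) (solAt pick r) := by
  simp [solAt, range_add_one]

theorem solAt_mono {r r' : ℕ} (h : r ≤ r') : solAt pick r ⊆ solAt pick r' :=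
  image_subset_image (range_subset_range.2 h)

theorem card_solAt_le (r : ℕ) : (solAt pick r).card ≤ r :=
  card_image_le.trans_eq (card_range r)

end solAt

section Greedy

variable {f : Finset α → ℝ} {s : ℕ} {pick : ℕ → α} {avail : ℕ → Finset α}

theorem le_numTurns_of_forall_mem_avail {k k' : ℕ} {t : ℕ → α}
    (hstop : (solAt pick s).card = k ∨ avail s = ∅) (hk' : k' ≤ k)
    (htavail : ∀ j < k', ∀ r : ℕ, r ≤ j → r ≤ s → t j ∈ avail r) : k' ≤ s := by
  by_contra! h
  have hne : avail s ≠ ∅ := ne_empty_of_mem (htavail s h s le_rfl le_rfl)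
  have hfull := hstop.resolve_right hne
  have := card_solAt_le pick s
  omega

theorem marginal_final_le_greedy_gain
    (hmono : ∀ ⦃S T : Finset α⦄, S ⊆ T → f S ≤ f T) (hsub : Submodular f)
    (hgreedy : ∀ r < s, ∀ x ∈ avail r,
      f (insert x (solAt pick r)) - f (solAt pick r) ≤
        f (insert (pick r) (solAt pick r)) - f (solAt pick r))
    {j : ℕ} (hj : j < s) {x : α} (hx : x ∈ avail j) :
    f (insert x (solAt pick s)) - f (solAt pick s) ≤
      f (solAt pick (j + 1)) - f (solAt pick j) := by
  have hgain := hgreedy j hj x hx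
  rw [← solAt_succ] at hgain
  by_cases hxS : x ∈ solAt pick s
  · have : f (solAt pick j) ≤ f (solAt pick (j + 1)) := hmono (solAt_mono pick j.le_succ)
    rw [insert_eq_of_mem hxS]
    linarith
  · have := hsub (solAt_mono pick hj.le) hxS
    linarith

end Greedy

end Lemmas

theorem stmt_9_general {α : Type*} [DecidableEq α]
    (f : Finset α → ℝ) (k : ℕ)
    (hnorm : f ∅ = 0)
    (hmono : ∀ ⦃S T : Finset α⦄, S ⊆ T → f S ≤ f T)
    (hsub : Submodular f)
    (s : ℕ) (pick : ℕ → α) (avail : ℕ → Finset α)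
    (hgreedy : ∀ r < s, ∀ x ∈ avail r,
      f (insert x (solAt pick r)) - f (solAt pick r) ≤
        f (insert (pick r) (solAt pick r)) - f (solAt pick r))
    (hstop : (solAt pick s).card = k ∨ avail s = ∅)
    (k' : ℕ) (hk' : k' ≤ k) (t : ℕ → α)
    (htavail : ∀ j < k', ∀ r : ℕ, r ≤ j → r ≤ s → t j ∈ avail r) :
    f ((Finset.range k').image t) / 2 ≤ f (solAt pick s) := by
  set S := solAt pick s
  have hk's : k' ≤ s := le_numTurns_of_forall_mem_avail hstop hk' htavail
  have hgains : ∑ j ∈ range k', (f (insert (t j) S) - f S) ≤ f S :=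
    calc ∑ j ∈ range k', (f (insert (t j) S) - f S)
        ≤ ∑ j ∈ range k', (f (solAt pick (j + 1)) - f (solAt pick j)) :=
          sum_le_sum fun j hj_mem => by
            have hj : j < k' := mem_range.1 hj_mem
            exact marginal_final_le_greedy_gain hmono hsub hgreedy (hj.trans_le hk's)
              (htavail j hj j le_rfl (hj.trans_le hk's).le)
      _ = f (solAt pick k') := by
          rw [sum_range_sub (fun j => f (solAt pick j)), solAt_zero, hnorm, sub_zero]
      _ ≤ f S := hmono (solAt_mono pick hk's)
  have hunion := hsub.le_add_sum_marginal hmono S t (range k')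
  have hT : f ((range k').image t) ≤ f (S ∪ (range k').image t) := hmono subset_union_right
  linarith

/-- Theorem 4.5: consider the greedy round-robin process of agent `i` with a normalized monotone
submodular objective `f` and a cardinality constraint `|S| ≤ k` (at each turn, if the solution is
not full and items remain, the agent adds an available item of maximum marginal value; other
agents may remove further items between turns; the process ends when the solution is full or no
items remain), with final solution `S = solAt pick s`. Let `T = {t 0, …, t (k'−1)}`, `k' ≤ k`, be
a set of distinct items indexed in removal order such that no element of `T` is removed before
agent `i`'s first pick and at most one element of `T` is removed between any two consecutive turns
of agent `i` (hence `t j` is still available at each of the agent's turns `r ≤ min j s`). Then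
`f(S) ≥ f(T) / 2`. -/
theorem stmt_9 {α : Type*} [DecidableEq α] [Fintype α]
    (f : Finset α → ℝ) (k : ℕ)
    (hnorm : f ∅ = 0)
    (hmono : ∀ ⦃S T : Finset α⦄, S ⊆ T → f S ≤ f T)
    (hsub : Submodular f)
    (s : ℕ) (pick : ℕ → α) (avail : ℕ → Finset α)
    (hmem : ∀ r < s, pick r ∈ avail r)
    (hcard : ∀ r < s, (solAt pick r).card < k)
    (hgreedy : ∀ r < s, ∀ x ∈ avail r,
      f (insert x (solAt pick r)) - f (solAt pick r) ≤
        f (insert (pick r) (solAt pick r)) - f (solAt pick r))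
    (hrem : ∀ r < s, avail (r + 1) ⊆ (avail r).erase (pick r))
    (hstop : (solAt pick s).card = k ∨ avail s = ∅)
    (k' : ℕ) (hk' : k' ≤ k) (t : ℕ → α) (htinj : Set.InjOn t (Set.Iio k'))
    (htavail : ∀ j < k', ∀ r : ℕ, r ≤ j → r ≤ s → t j ∈ avail r) :
    f ((Finset.range k').image t) / 2 ≤ f (solAt pick s) :=
  stmt_9_general f k hnorm hmono hsub s pick avail hgreedy hstop k' hk' t htavail
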